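/- Let P have rows λ¹, …, λ^{r+1} and set ℓ^j_i = λ^j_i − i + 1; let P̃ be obtained by increasing position i₀ of rows i₀, …, j₀−1 by 1, with corresponding ℓ̃^j_i. Then for all (j, i) ≠ (j₀, i₀) with 1 ≤ i < j ≤ r+1: ∏_{p=i}^{j-1} (ℓ̃^{j-1}_i − ℓ̃^{j-1}_p)! / (ℓ̃^j_i − ℓ̃^{j-1}_p)! = ∏_{p=i}^{j-1} (ℓ^{j-1}_i − ℓ^{j-1}_p)! / (ℓ^j_i − ℓ^{j-1}_p)!. -/

import Mathlib

/-!
Outside the block `j < j₀ ∨ (j = j₀ ∧ i < i₀)` none of the entries entering the product at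
`(j, i)` is raised. Inside it, minimality of `j₀` and `i₀` makes rows `j` and `j - 1` of `P`
agree at position `i`, and they are raised together (as `i < j`), so every factor of both
products is `n! / n! = 1`.
-/

/-- A Gelfand–Tsetlin pattern for `sl_{r+1}`: rows are indexed `1,…,r+1`,
row `j` has entries `P j 1 ≥ … ≥ P j j`, with the interlacing condition
`P j i ≥ P (j-1) i ≥ P j (i+1)` for `1 ≤ i < j ≤ r+1`. -/
def IsGTPattern (r : ℕ) (P : ℕ → ℕ → ℤ) : Prop :=
  ∀ i j, 1 ≤ i → i < j → j ≤ r + 1 → P (j-1) i ≤ P j i ∧ P j (i+1) ≤ P (j-1) i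

/-- The bounding sequence (last row) of the pattern is `lam`. -/
def Bounded (r : ℕ) (P : ℕ → ℕ → ℤ) (lam : ℕ → ℤ) : Prop :=
  ∀ i, 1 ≤ i → i ≤ r + 1 → P (r+1) i = lam i

/-- Row-wise dominance: `Dom r P' P` means the partial row sums of `P'`
dominate those of `P` in every row. -/
def Dom (r : ℕ) (P' P : ℕ → ℕ → ℤ) : Prop :=
  ∀ j i, 1 ≤ i → i ≤ j → j ≤ r + 1 →
    ∑ s ∈ Finset.Icc 1 i, P j s ≤ ∑ s ∈ Finset.Icc 1 i, P' j s

/-- The `k`-th coordinate of the weight of a pattern: difference of row sums. -/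
def wt (P : ℕ → ℕ → ℤ) (k : ℕ) : ℤ :=
  (∑ i ∈ Finset.Icc 1 k, P k i) - ∑ i ∈ Finset.Icc 1 (k-1), P (k-1) i

/-- The length of a pattern. -/
def lengthP (r : ℕ) (P : ℕ → ℕ → ℤ) : ℤ :=
  ∑ j ∈ Finset.Icc 2 (r+1), ∑ i ∈ Finset.Icc 1 (j-1), (P j i - P (j-1) i)

open Finset

def gtFactorialProd (P : ℕ → ℕ → ℤ) (j i : ℕ) : ℚ :=
  ∏ p ∈ Icc i (j-1),
    ((((P (j-1) i - i + 1) - (P (j-1) p - p + 1)).toNat.factorial : ℚ) /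
     (((P j i - i + 1) - (P (j-1) p - p + 1)).toNat.factorial : ℚ))

def raiseColumn (P : ℕ → ℕ → ℤ) (i₀ j₀ : ℕ) (j i : ℕ) : ℤ :=
  if i = i₀ ∧ i₀ ≤ j ∧ j < j₀ then P j i + 1 else P j i

section

variable {P Q : ℕ → ℕ → ℤ} {i₀ j₀ j i : ℕ}

theorem gtFactorialProd_eq_one (h : P j i = P (j-1) i) : gtFactorialProd P j i = 1 :=
  prod_eq_one fun _ _ => by
    rw [h]
    exact div_self (Nat.cast_ne_zero.mpr (Nat.factorial_ne_zero _))

theorem gtFactorialProd_congr (hi : Q (j-1) i = P (j-1) i) (hj : Q j i = P j i)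
    (hp : ∀ p ∈ Icc i (j-1), Q (j-1) p = P (j-1) p) :
    gtFactorialProd Q j i = gtFactorialProd P j i :=
  prod_congr rfl fun p hmem => by rw [hi, hj, hp p hmem]

theorem raiseColumn_of_le_or_ne (h : j₀ ≤ j ∨ i ≠ i₀) :
    raiseColumn P i₀ j₀ j i = P j i :=
  if_neg (by omega)

theorem raiseColumn_eq_sub_one (hij : i < j) (hj : j < j₀ ∨ (j = j₀ ∧ i < i₀))
    (h : P j i = P (j-1) i) : raiseColumn P i₀ j₀ j i = raiseColumn P i₀ j₀ (j-1) i := by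
  unfold raiseColumn
  split_ifs <;> omega

end

theorem factorial_products_agree_general (r : ℕ) (P Pt : ℕ → ℕ → ℤ) (i₀ j₀ : ℕ)
    (hjmin : ∀ j, 2 ≤ j → j < j₀ → ∀ i, 1 ≤ i → i < j → P j i = P (j-1) i)
    (himin : ∀ i, 1 ≤ i → i < i₀ → P j₀ i = P (j₀-1) i)
    (hPt : ∀ j i, Pt j i = if i = i₀ ∧ i₀ ≤ j ∧ j < j₀ then P j i + 1 else P j i) :
    ∀ j i, 1 ≤ i → i < j → j ≤ r + 1 → ¬(j = j₀ ∧ i = i₀) →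
      (∏ p ∈ Finset.Icc i (j-1),
        ((((Pt (j-1) i - i + 1) - (Pt (j-1) p - p + 1)).toNat.factorial : ℚ) /
         (((Pt j i - i + 1) - (Pt (j-1) p - p + 1)).toNat.factorial : ℚ))) =
      ∏ p ∈ Finset.Icc i (j-1),
        ((((P (j-1) i - i + 1) - (P (j-1) p - p + 1)).toNat.factorial : ℚ) /
         (((P j i - i + 1) - (P (j-1) p - p + 1)).toNat.factorial : ℚ)) := by
  intro j i hi hij _ hne
  obtain rfl : Pt = raiseColumn P i₀ j₀ := funext fun j => funext (hPt j)
  change gtFactorialProd (raiseColumn P i₀ j₀) j i = gtFactorialProd P j i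
  by_cases hblock : j < j₀ ∨ (j = j₀ ∧ i < i₀)
  · have hrow : P j i = P (j-1) i := by
      rcases hblock with hj | ⟨rfl, hi₀⟩
      · exact hjmin j (by omega) hj i hi hij
      · exact himin i hi hi₀
    rw [gtFactorialProd_eq_one hrow,
      gtFactorialProd_eq_one (raiseColumn_eq_sub_one hij hblock hrow)]
  · exact gtFactorialProd_congr (raiseColumn_of_le_or_ne (by omega))
      (raiseColumn_of_le_or_ne (by omega))
      fun p hp => raiseColumn_of_le_or_ne (by simp only [mem_Icc] at hp; omega)

/-- The GT-coefficient factorial products, formed with ℓ j i = P j i - i + 1,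
agree for P and Pt at every (j, i) ≠ (j₀, i₀) with 1 ≤ i < j ≤ r+1. -/
theorem factorial_products_agree (r : ℕ) (lam : ℕ → ℤ) (P Pt : ℕ → ℕ → ℤ) (i₀ j₀ : ℕ)
    (hP : IsGTPattern r P) (hb : Bounded r P lam)
    (hlen : 0 < lengthP r P)
    (hj₀2 : 2 ≤ j₀) (hj₀r : j₀ ≤ r + 1)
    (hj₀d : ∃ i, 1 ≤ i ∧ i < j₀ ∧ P j₀ i ≠ P (j₀-1) i)
    (hjmin : ∀ j, 2 ≤ j → j < j₀ → ∀ i, 1 ≤ i → i < j → P j i = P (j-1) i)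
    (hi₀1 : 1 ≤ i₀) (hi₀j : i₀ < j₀) (hi₀d : P j₀ i₀ ≠ P (j₀-1) i₀)
    (himin : ∀ i, 1 ≤ i → i < i₀ → P j₀ i = P (j₀-1) i)
    (hPt : ∀ j i, Pt j i = if i = i₀ ∧ i₀ ≤ j ∧ j < j₀ then P j i + 1 else P j i) :
    ∀ j i, 1 ≤ i → i < j → j ≤ r + 1 → ¬(j = j₀ ∧ i = i₀) →
      (∏ p ∈ Finset.Icc i (j-1),
        ((((Pt (j-1) i - i + 1) - (Pt (j-1) p - p + 1)).toNat.factorial : ℚ) /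
         (((Pt j i - i + 1) - (Pt (j-1) p - p + 1)).toNat.factorial : ℚ))) =
      ∏ p ∈ Finset.Icc i (j-1),
        ((((P (j-1) i - i + 1) - (P (j-1) p - p + 1)).toNat.factorial : ℚ) /
         (((P j i - i + 1) - (P (j-1) p - p + 1)).toNat.factorial : ℚ)) :=
  factorial_products_agree_general r P Pt i₀ j₀ hjmin himin hPt
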